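/- Let X_M and X_F be independent with densities f_{X_v}(x) = 2πλ_v x e^{-πλ_v x²} for v ∈ {M,F}, P_M > P_F > 0, α > 2. Then P(X_F^{-α} ≥ (P_M/P_F) X_M^{-α}) = λ_F/(λ_F + (P_M/P_F)^{2/α} λ_M). -/

import Mathlib

/-! With `k = (P_M / P_F) ^ (-1/α)` the event is `X_F ≤ k X_M` (both distances are a.s. positive).
Conditioning on `X_M = x`, it has probability `1 - exp (-π λ_F k² x²)`, and since
`f_{λ_M}(x) exp (-π b x²) = λ_M / (λ_M + b) · f_{λ_M + b}(x)` for the density `f_λ`, averaging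
over `X_M` gives `1 - λ_M / (λ_M + λ_F k²)`. -/

open MeasureTheory Real Set

noncomputable def nearestDistPDF (l x : ℝ) : ℝ := 2 * π * l * x * exp (-(π * l * x ^ 2))

def HasNearestDistLaw {Ω : Type*} [MeasurableSpace Ω] (μ : Measure Ω) (X : Ω → ℝ) (l : ℝ) :
    Prop :=
  ∀ s : Set ℝ, MeasurableSet s → μ (X ⁻¹' s) = ENNReal.ofReal (∫ x in s ∩ Ici 0, nearestDistPDF l x)

lemma continuous_nearestDistPDF (l : ℝ) : Continuous (nearestDistPDF l) := by
  unfold nearestDistPDF; fun_prop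

lemma nearestDistPDF_nonneg {l x : ℝ} (hl : 0 ≤ l) (hx : 0 ≤ x) : 0 ≤ nearestDistPDF l x := by
  unfold nearestDistPDF; positivity

lemma hasDerivAt_neg_exp_neg_mul_sq (l x : ℝ) :
    HasDerivAt (fun y => -exp (-(π * l * y ^ 2))) (nearestDistPDF l x) x := by
  refine (((hasDerivAt_pow 2 x).const_mul (π * l)).fun_neg.exp).fun_neg.congr_deriv ?_
  rw [nearestDistPDF]
  push_cast
  ring

lemma tendsto_neg_exp_neg_mul_sq {l : ℝ} (hl : 0 < l) :
    Filter.Tendsto (fun y => -exp (-(π * l * y ^ 2))) Filter.atTop (nhds 0) := by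
  have h := Filter.tendsto_neg_atTop_atBot.comp
    ((Filter.tendsto_pow_atTop two_ne_zero).const_mul_atTop (by positivity : 0 < π * l))
  simpa using (tendsto_exp_atBot.comp h).neg

lemma integrableOn_Ioi_nearestDistPDF {l : ℝ} (hl : 0 < l) :
    IntegrableOn (nearestDistPDF l) (Ioi 0) :=
  integrableOn_Ioi_deriv_of_nonneg' (fun x _ => hasDerivAt_neg_exp_neg_mul_sq l x)
    (fun _ hx => nearestDistPDF_nonneg hl.le (le_of_lt hx)) (tendsto_neg_exp_neg_mul_sq hl)

lemma integral_Ioi_nearestDistPDF {l : ℝ} (hl : 0 < l) :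
    ∫ x in Ioi 0, nearestDistPDF l x = 1 := by
  rw [integral_Ioi_of_hasDerivAt_of_tendsto' (fun x _ => hasDerivAt_neg_exp_neg_mul_sq l x)
    (integrableOn_Ioi_nearestDistPDF hl) (tendsto_neg_exp_neg_mul_sq hl)]
  simp

lemma integral_Icc_nearestDistPDF (l : ℝ) {t : ℝ} (ht : 0 ≤ t) :
    ∫ x in Icc 0 t, nearestDistPDF l x = 1 - exp (-(π * l * t ^ 2)) := by
  rw [integral_Icc_eq_integral_Ioc, ← intervalIntegral.integral_of_le ht,
    intervalIntegral.integral_eq_sub_of_hasDerivAt (fun x _ => hasDerivAt_neg_exp_neg_mul_sq l x)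
      ((continuous_nearestDistPDF l).intervalIntegrable _ _)]
  rw [zero_pow two_ne_zero, mul_zero, neg_zero, exp_zero]
  ring

lemma nearestDistPDF_mul_one_sub_exp {l b : ℝ} (hlb : l + b ≠ 0) (x : ℝ) :
    nearestDistPDF l x * (1 - exp (-(π * b * x ^ 2))) =
      nearestDistPDF l x - l / (l + b) * nearestDistPDF (l + b) x := by
  have hexp : exp (-(π * (l + b) * x ^ 2)) = exp (-(π * l * x ^ 2)) * exp (-(π * b * x ^ 2)) := by
    rw [← exp_add]; ring_nf
  unfold nearestDistPDF
  rw [hexp]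
  field_simp

lemma integral_Ioi_nearestDistPDF_mul_one_sub_exp {l b : ℝ} (hl : 0 < l) (hb : 0 ≤ b) :
    ∫ x in Ioi 0, nearestDistPDF l x * (1 - exp (-(π * b * x ^ 2))) = b / (l + b) := by
  have hlb : 0 < l + b := by linarith
  simp_rw [nearestDistPDF_mul_one_sub_exp hlb.ne']
  rw [integral_sub (integrableOn_Ioi_nearestDistPDF hl)
      ((integrableOn_Ioi_nearestDistPDF hlb).const_mul _), integral_const_mul,
    integral_Ioi_nearestDistPDF hl, integral_Ioi_nearestDistPDF hlb]
  field_simp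
  ring

lemma integrableOn_Ioi_nearestDistPDF_mul_one_sub_exp {l b : ℝ} (hl : 0 < l) (hb : 0 ≤ b) :
    IntegrableOn (fun x => nearestDistPDF l x * (1 - exp (-(π * b * x ^ 2)))) (Ioi 0) := by
  have hlb : 0 < l + b := by linarith
  simp_rw [nearestDistPDF_mul_one_sub_exp hlb.ne']
  exact (integrableOn_Ioi_nearestDistPDF hl).sub
    ((integrableOn_Ioi_nearestDistPDF hlb).const_mul _)

namespace HasNearestDistLaw

variable {Ω : Type*} [MeasurableSpace Ω] {μ : Measure Ω} {X : Ω → ℝ} {l : ℝ}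

lemma measure_preimage_Iic (h : HasNearestDistLaw μ X l) {t : ℝ} (ht : 0 ≤ t) :
    μ (X ⁻¹' Iic t) = ENNReal.ofReal (1 - exp (-(π * l * t ^ 2))) := by
  rw [h _ measurableSet_Iic, inter_comm, Ici_inter_Iic, integral_Icc_nearestDistPDF l ht]

lemma ae_pos (h : HasNearestDistLaw μ X l) : ∀ᵐ ω ∂μ, 0 < X ω := by
  rw [ae_iff]
  simp_rw [not_lt]
  exact (h.measure_preimage_Iic le_rfl).trans (by simp)

lemma map_eq (h : HasNearestDistLaw μ X l) (hX : Measurable X) (hl : 0 < l) :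
    μ.map X = (volume.restrict (Ioi 0)).withDensity
      (fun x => ENNReal.ofReal (nearestDistPDF l x)) := by
  ext s hs
  rw [Measure.map_apply hX hs, h s hs, withDensity_apply _ hs, Measure.restrict_restrict hs,
    ← ofReal_integral_eq_lintegral_ofReal
      ((integrableOn_Ioi_nearestDistPDF hl).mono_set inter_subset_right)
      ((ae_restrict_mem (hs.inter measurableSet_Ioi)).mono
        fun x hx => nearestDistPDF_nonneg hl.le (le_of_lt hx.2))]
  exact congrArg ENNReal.ofReal
    (setIntegral_congr_set (ae_eq_set_inter (Filter.EventuallyEq.refl _ _) Ioi_ae_eq_Ici.symm))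

end HasNearestDistLaw

lemma le_mul_rpow_neg_iff {c α x y : ℝ} (hc : 0 < c) (hα : 0 < α) (hx : 0 < x) (hy : 0 < y) :
    c * x ^ (-α) ≤ y ^ (-α) ↔ y ≤ c ^ (-α⁻¹) * x := by
  have hcx : c * x ^ (-α) = (c ^ (-α⁻¹) * x) ^ (-α) := by
    rw [mul_rpow (by positivity) hx.le, ← rpow_mul hc.le, neg_mul_neg, inv_mul_cancel₀ hα.ne',
      rpow_one]
  rw [hcx, rpow_le_rpow_iff_of_neg (by positivity) hy (by linarith)]

lemma measure_le_mul_of_indepFun {Ω : Type*} [MeasurableSpace Ω] {μ : Measure Ω}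
    [IsFiniteMeasure μ] {XM XF : Ω → ℝ} (hXM : Measurable XM) (hXF : Measurable XF)
    (hind : ProbabilityTheory.IndepFun XM XF μ) {lM lF : ℝ} (hlM : 0 < lM) (hlF : 0 ≤ lF)
    (hM : HasNearestDistLaw μ XM lM) (hF : HasNearestDistLaw μ XF lF) {k : ℝ} (hk : 0 ≤ k) :
    μ {ω | XF ω ≤ k * XM ω} = ENNReal.ofReal (lF * k ^ 2 / (lM + lF * k ^ 2)) := by
  have hS : MeasurableSet {p : ℝ × ℝ | p.2 ≤ k * p.1} :=
    measurableSet_le measurable_snd (measurable_fst.const_mul k)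
  have hslice : Measurable fun x => μ.map XF (Iic (k * x)) := measurable_measure_prodMk_left hS
  have hb : 0 ≤ lF * k ^ 2 := by positivity
  calc μ {ω | XF ω ≤ k * XM ω}
      = (μ.map XM).prod (μ.map XF) {p : ℝ × ℝ | p.2 ≤ k * p.1} := by
        rw [← (ProbabilityTheory.indepFun_iff_map_prod_eq_prod_map_map hXM.aemeasurable
          hXF.aemeasurable).1 hind, Measure.map_apply (hXM.prodMk hXF) hS]
        rfl
    _ = ∫⁻ x, μ.map XF (Iic (k * x)) ∂μ.map XM := Measure.prod_apply hS
    _ = ∫⁻ x in Ioi 0, ENNReal.ofReal (nearestDistPDF lM x) * μ.map XF (Iic (k * x)) := by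
        rw [hM.map_eq hXM hlM, lintegral_withDensity_eq_lintegral_mul _
          (continuous_nearestDistPDF lM).measurable.ennreal_ofReal hslice]
        rfl
    _ = ∫⁻ x in Ioi 0,
          ENNReal.ofReal (nearestDistPDF lM x * (1 - exp (-(π * (lF * k ^ 2) * x ^ 2)))) := by
        refine setLIntegral_congr_fun measurableSet_Ioi fun x hx => ?_
        have hx : 0 < x := hx
        rw [Measure.map_apply hXF measurableSet_Iic, hF.measure_preimage_Iic (by positivity),
          ← ENNReal.ofReal_mul (nearestDistPDF_nonneg hlM.le hx.le)]
        ring_nf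
    _ = ENNReal.ofReal (lF * k ^ 2 / (lM + lF * k ^ 2)) := by
        rw [← ofReal_integral_eq_lintegral_ofReal
          (integrableOn_Ioi_nearestDistPDF_mul_one_sub_exp hlM hb)
          ((ae_restrict_mem measurableSet_Ioi).mono fun x hx => mul_nonneg
            (nearestDistPDF_nonneg hlM.le (le_of_lt hx))
            (sub_nonneg.2 (exp_le_one_iff.2 (neg_nonpos.2 (by positivity))))),
          integral_Ioi_nearestDistPDF_mul_one_sub_exp hlM hb]

theorem stmt_2 {Ω : Type*} [MeasurableSpace Ω] (μ : Measure Ω) [IsProbabilityMeasure μ]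
    (XM XF : Ω → ℝ) (hXM : Measurable XM) (hXF : Measurable XF)
    (lM lF : ℝ) (hlM : 0 < lM) (hlF : 0 < lF)
    (hind : ProbabilityTheory.IndepFun XM XF μ)
    (hdM : ∀ s : Set ℝ, MeasurableSet s →
      μ (XM ⁻¹' s) = ENNReal.ofReal
        (∫ x in s ∩ Ici 0, 2 * π * lM * x * Real.exp (-(π * lM * x ^ 2))))
    (hdF : ∀ s : Set ℝ, MeasurableSet s →
      μ (XF ⁻¹' s) = ENNReal.ofReal
        (∫ x in s ∩ Ici 0, 2 * π * lF * x * Real.exp (-(π * lF * x ^ 2))))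
    (PM PF α : ℝ) (hPF : 0 < PF) (hPM : PF < PM) (hα : 2 < α) :
    μ {ω | XF ω ^ (-α) ≥ (PM / PF) * XM ω ^ (-α)} =
      ENNReal.ofReal (lF / (lF + (PM / PF) ^ (2 / α) * lM)) := by
  have hM : HasNearestDistLaw μ XM lM := hdM
  have hF : HasNearestDistLaw μ XF lF := hdF
  have hc : 0 < PM / PF := div_pos (hPF.trans hPM) hPF
  have hα0 : 0 < α := by linarith
  set k := (PM / PF) ^ (-α⁻¹)
  have hevent : {ω | XF ω ^ (-α) ≥ (PM / PF) * XM ω ^ (-α)} =ᵐ[μ] {ω | XF ω ≤ k * XM ω} := by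
    filter_upwards [hM.ae_pos, hF.ae_pos] with ω hXMω hXFω
    exact propext (le_mul_rpow_neg_iff hc hα0 hXMω hXFω)
  have hk2 : k ^ 2 * (PM / PF) ^ (2 / α) = 1 := by
    rw [← rpow_natCast, ← rpow_mul hc.le, ← rpow_add hc]
    push_cast
    rw [show -α⁻¹ * 2 + 2 / α = 0 by ring, rpow_zero]
  rw [measure_congr hevent, measure_le_mul_of_indepFun hXM hXF hind hlM hlF.le hM hF
    (by positivity)]
  congr 1
  field_simp
  linear_combination lM * hk2
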